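/- arXiv:2202.06906 — 4 statements merged into one kernel-verified Lean document; each statement's English description precedes it below -/
import Mathlib

section
/- Let Λ be a single-vertex k-graph viewed as a monoid. For constructible right ideals X = ∪_{i=1}^l μ_i Λ and Y = ∪_{j=1}^{l'} ν_j Λ in Λ, the intersection X ∩ Y equals the union of the sets μ_i α Λ over all 1 ≤ i ≤ l and all α ∈ Ext(μ_i; {ν_1,…,ν_{l'}}), where Ext(μ; E) := {α : there exists β with (α,β) ∈ Λ^min(μ,ν) for some ν ∈ E}. -/
/-! Proof idea: if `x = μ s = ν u`, put `m = d(μ) ∨ d(ν) ≤ d(x)`. Unique factorization of `x` at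
degree `m` gives `x = μ α γ = ν β γ` with `d(μ α) = d(ν β) = m`, i.e. `(α, β) ∈ Λ^min(μ, ν)`. -/

/-- A single-vertex `k`-graph, viewed as a monoid `Λ` with a degree map
`d : Λ → ℕᵏ` satisfying the unique factorization property. -/
structure OneVertexKGraphStr (k : ℕ) (Λ : Type) [Monoid Λ] where
  d : Λ → Fin k → ℕ
  d_one : d 1 = 0
  d_mul : ∀ μ ν, d (μ * ν) = d μ + d ν
  factor : ∀ (μ : Λ) (m n : Fin k → ℕ), d μ = m + n →
    ∃! p : Λ × Λ, μ = p.1 * p.2 ∧ d p.1 = m ∧ d p.2 = n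


/-- `Λ^min(μ,ν) = {(α,β) : μα = νβ, d(μα) = d(μ) ∨ d(ν)}`. -/
def LambdaMin {k : ℕ} {Λ : Type} [Monoid Λ] (K : OneVertexKGraphStr k Λ)
    (μ ν : Λ) : Set (Λ × Λ) :=
  {p | μ * p.1 = ν * p.2 ∧ K.d (μ * p.1) = K.d μ ⊔ K.d ν}

/-- `Ext(μ;E) = {α : (α,β) ∈ Λ^min(μ,ν) for some ν ∈ E and some β}`. -/
def ExtSet {k : ℕ} {Λ : Type} [Monoid Λ] (K : OneVertexKGraphStr k Λ)
    (μ : Λ) (E : Set Λ) : Set Λ :=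
  {α | ∃ β ν, ν ∈ E ∧ (α, β) ∈ LambdaMin K μ ν}

namespace OneVertexKGraphStr

variable {k : ℕ} {Λ : Type} [Monoid Λ] (K : OneVertexKGraphStr k Λ)

theorem exists_mul_eq_of_le {x : Λ} {m : Fin k → ℕ} (h : m ≤ K.d x) :
    ∃ a b, x = a * b ∧ K.d a = m := by
  obtain ⟨⟨a, b⟩, ⟨hx, ha, -⟩, -⟩ := K.factor x m (K.d x - m) (add_tsub_cancel_of_le h).symm
  exact ⟨a, b, hx, ha⟩

theorem eq_and_eq_of_mul_eq_mul {a b a' b' : Λ} (h : a * b = a' * b') (hd : K.d a = K.d a') :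
    a = a' ∧ b = b' := by
  have hdb : K.d b = K.d b' := by
    have := congrArg K.d h
    rwa [K.d_mul, K.d_mul, hd, add_right_inj] at this
  obtain ⟨p, -, huniq⟩ := K.factor (a * b) (K.d a) (K.d b) (K.d_mul a b)
  have hp := (huniq (a, b) ⟨rfl, rfl, rfl⟩).trans (huniq (a', b') ⟨h, hd.symm, hdb.symm⟩).symm
  exact Prod.ext_iff.mp hp

theorem exists_lambdaMin_of_mul_eq {μ ν s u : Λ} (h : μ * s = ν * u) :
    ∃ α β γ, (α, β) ∈ LambdaMin K μ ν ∧ s = α * γ ∧ u = β * γ := by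
  set m := K.d μ ⊔ K.d ν
  have hdμ : K.d (μ * s) = K.d μ + K.d s := K.d_mul μ s
  have hdν : K.d (μ * s) = K.d ν + K.d u := by rw [h, K.d_mul]
  have hm : m ≤ K.d (μ * s) := sup_le (hdμ ▸ le_self_add) (hdν ▸ le_self_add)
  obtain ⟨α, γ, rfl, hα⟩ := K.exists_mul_eq_of_le (m := m - K.d μ)
    (tsub_le_iff_left.mpr (hdμ ▸ hm))
  obtain ⟨β, γ', rfl, hβ⟩ := K.exists_mul_eq_of_le (m := m - K.d ν)
    (tsub_le_iff_left.mpr (hdν ▸ hm))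
  have hμα : K.d (μ * α) = m := by rw [K.d_mul, hα, add_tsub_cancel_of_le le_sup_left]
  have hνβ : K.d (ν * β) = m := by rw [K.d_mul, hβ, add_tsub_cancel_of_le le_sup_right]
  obtain ⟨hcomm, rfl⟩ := K.eq_and_eq_of_mul_eq_mul (a := μ * α) (a' := ν * β)
    (by simpa only [mul_assoc] using h) (hμα.trans hνβ.symm)
  exact ⟨α, β, γ, ⟨hcomm, hμα⟩, rfl, rfl⟩

end OneVertexKGraphStr

/-- For `X = ∪ᵢ μᵢΛ` and `Y = ∪ⱼ νⱼΛ`,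
`X ∩ Y = ∪ { μᵢαΛ : 1 ≤ i ≤ l, α ∈ Ext(μᵢ; {ν₁,…,ν_{l'}}) }`. -/
theorem ideal_intersection {k : ℕ} {Λ : Type} [Monoid Λ]
    (K : OneVertexKGraphStr k Λ) {l l' : ℕ} (μ : Fin l → Λ) (ν : Fin l' → Λ) :
    ((⋃ i, {x | ∃ t, x = μ i * t}) ∩ ⋃ j, {x | ∃ t, x = ν j * t}) =
      ⋃ i, ⋃ α ∈ ExtSet K (μ i) (Set.range ν), {x | ∃ t, x = μ i * α * t} := by
  ext x
  simp only [Set.mem_inter_iff, Set.mem_iUnion, Set.mem_ofPred_eq, ExtSet, Set.mem_range]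
  constructor
  · rintro ⟨⟨i, s, rfl⟩, ⟨j, u, hu⟩⟩
    obtain ⟨α, β, γ, hmin, rfl, -⟩ := K.exists_lambdaMin_of_mul_eq hu
    exact ⟨i, α, ⟨β, ν j, ⟨j, rfl⟩, hmin⟩, γ, (mul_assoc _ _ _).symm⟩
  · rintro ⟨i, α, ⟨β, -, ⟨j, rfl⟩, hcomm, -⟩, t, rfl⟩
    refine ⟨⟨i, α * t, mul_assoc _ _ _⟩, ⟨j, β * t, ?_⟩⟩
    rw [← mul_assoc]
    exact congrArg (· * t) hcomm
end

section
/- Let (G,Λ,φ) be a single-vertex self-similar k-graph such that for each μ ∈ Λ the map g ↦ φ(g,μ) from G to G is surjective. If F is a finite collection of constructible right ideals of Λ that is a foundation set in 𝒥(Λ), then F × {G} := {X × G : X ∈ F} is a foundation set in 𝒥(Λ ⋈ G), and conversely. -/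
/-- A self-similar structure `(G,Λ,φ)` on a single-vertex `k`-graph `Λ`. -/
structure OneVertexSelfSimilar (k : ℕ) (G : Type) [Group G] (Λ : Type)
    [Monoid Λ] extends OneVertexKGraphStr k Λ where
  act : G → Λ → Λ
  φ : G → Λ → G
  act_one : ∀ g, act g 1 = 1
  one_act : ∀ μ, act 1 μ = μ
  act_mul : ∀ g h μ, act (g * h) μ = act g (act h μ)
  act_d : ∀ g μ, d (act g μ) = d μ
  cocycle : ∀ g h μ, φ (g * h) μ = φ g (act h μ) * φ h μ
  selfsim : ∀ g μ ν, act g (μ * ν) = act g μ * act (φ g μ) ν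
  φ_mul : ∀ g μ ν, φ g (μ * ν) = φ (φ g μ) ν
  φ_one : ∀ g, φ g 1 = g

/-- The Zappa–Szép multiplication on `Λ × G`:
`(μ,g)(ν,h) = (μ(g·ν), φ(g,ν)h)`. -/
def zsMul {k : ℕ} {G : Type} [Group G] {Λ : Type} [Monoid Λ]
    (SS : OneVertexSelfSimilar k G Λ) (p q : Λ × G) : Λ × G :=
  (p.1 * SS.act p.2 q.1, SS.φ p.2 q.1 * q.2)

/-- The constructible right ideals `𝒥(S)` of a (left-cancellative) multiplication
`mul` on `S`: sets of the form `s₁⁻¹ r₁ ⋯ s_l⁻¹ r_l S`, together with `∅`. -/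
def Constructibles {S : Type} (mul : S → S → S) : Set (Set S) :=
  insert ∅
    {X | ∃ L : List (S × S),
      X = L.foldr (fun p Y => (mul p.1 ·) ⁻¹' ((mul p.2 ·) '' Y)) Set.univ}

/-- A foundation set in `𝒥(S)`: a finite `F ⊆ 𝒥(S)` such that every nonempty
`Y ∈ 𝒥(S)` intersects some member of `F`. -/
def IsFoundationSet {S : Type} (mul : S → S → S) (F : Set (Set S)) : Prop :=
  F.Finite ∧ F ⊆ Constructibles mul ∧
    ∀ Y ∈ Constructibles mul, Y ≠ ∅ → ∃ X ∈ F, (X ∩ Y).Nonempty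

section Aux

variable {k : ℕ} {G : Type} [Group G] {Λ : Type} [Monoid Λ]
variable (SS : OneVertexSelfSimilar k G Λ)

/-- The fold appearing in `Constructibles`. -/
def foldC {S : Type} (mul : S → S → S) (L : List (S × S)) : Set S :=
  L.foldr (fun p Y => (mul p.1 ·) ⁻¹' ((mul p.2 ·) '' Y)) Set.univ

lemma constructibles_eq {S : Type} (mul : S → S → S) :
    Constructibles mul = insert ∅ {X | ∃ L : List (S × S), X = foldC mul L} := rfl

lemma foldC_cons {S : Type} (mul : S → S → S) (p : S × S) (L : List (S × S)) :
    foldC mul (p :: L) = (mul p.1 ·) ⁻¹' ((mul p.2 ·) '' foldC mul L) := rfl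

lemma act_inv_act (g : G) (μ : Λ) : SS.act g⁻¹ (SS.act g μ) = μ := by
  rw [← SS.act_mul, inv_mul_cancel, SS.one_act]

lemma act_act_inv (g : G) (μ : Λ) : SS.act g (SS.act g⁻¹ μ) = μ := by
  rw [← SS.act_mul, mul_inv_cancel, SS.one_act]

lemma act_injective (g : G) : Function.Injective (SS.act g) := fun a b h => by
  have h2 := congrArg (SS.act g⁻¹) h
  rwa [act_inv_act, act_inv_act] at h2

lemma act_surjective (g : G) : Function.Surjective (SS.act g) :=
  fun x => ⟨SS.act g⁻¹ x, act_act_inv SS g x⟩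

lemma phi_one (μ : Λ) : SS.φ 1 μ = 1 := by
  have h := SS.cocycle 1 1 μ
  rw [one_mul, SS.one_act] at h
  exact right_eq_mul.mp h

/-- Key lemma: every constructible set of the Zappa–Szép product is, up to an
arbitrary twist by the action of any `g : G`, a product `Y ×ˢ univ` of a
constructible set of `Λ` with all of `G`. -/
lemma zs_fold (hsurj : ∀ μ : Λ, Function.Surjective fun g => SS.φ g μ)
    (L : List ((Λ × G) × (Λ × G))) :
    ∀ g : G, ∃ M : List (Λ × Λ),
      foldC (zsMul SS) L
        = (SS.act g '' foldC (· * ·) M) ×ˢ (Set.univ : Set G) := by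
  induction L with
  | nil =>
      intro g
      refine ⟨[], ?_⟩
      simp only [foldC, List.foldr_nil, Set.image_univ,
        (act_surjective SS g).range_eq, Set.univ_prod_univ]
  | cons p L ih =>
      intro g
      obtain ⟨⟨s, a⟩, ⟨r, b⟩⟩ := p
      obtain ⟨c, hc⟩ := hsurj s (a * g)⁻¹
      simp only at hc
      set h : G := b⁻¹ * (SS.φ c r)⁻¹ with hh
      obtain ⟨M, hM⟩ := ih h
      refine ⟨(SS.act c s, SS.act c r) :: M, ?_⟩
      set W : Set Λ := foldC (· * ·) M with hW
      have e1 : ∀ y : Λ, SS.act c (r * SS.act (b * h) y) = SS.act c r * y := by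
        intro y
        rw [SS.selfsim, ← SS.act_mul]
        have : SS.φ c r * (b * h) = 1 := by
          rw [hh]; group
        rw [this, SS.one_act]
      have e2 : ∀ μ : Λ, SS.act c (s * SS.act (a * g) μ) = SS.act c s * μ := by
        intro μ
        rw [SS.selfsim, ← SS.act_mul, hc, inv_mul_cancel, SS.one_act]
      have key : ∀ y μ : Λ,
          r * SS.act (b * h) y = s * SS.act (a * g) μ ↔
            SS.act c r * y = SS.act c s * μ := by
        intro y μ
        constructor
        · intro hyp
          rw [← e1, ← e2, hyp]
        · intro hyp
          apply act_injective SS c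
          rw [e1, e2, hyp]
      rw [foldC_cons, hM]
      ext ⟨ν, w⟩
      constructor
      · rintro ⟨⟨y', u⟩, ⟨⟨y, hyW, rfl⟩, -⟩, heq⟩
        have h1 : r * SS.act b (SS.act h y) = s * SS.act a ν :=
          congrArg Prod.fst heq
        rw [← SS.act_mul] at h1
        have hν : ν = SS.act g (SS.act g⁻¹ ν) := (act_act_inv SS g ν).symm
        rw [hν, ← SS.act_mul] at h1
        refine ⟨⟨SS.act g⁻¹ ν, ⟨y, hyW, (key y _).mp h1⟩, act_act_inv SS g ν⟩, trivial⟩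
      · rintro ⟨⟨μ, ⟨y, hyW, hmem⟩, rfl⟩, -⟩
        refine ⟨(SS.act h y, (SS.φ b (SS.act h y))⁻¹ * (SS.φ a (SS.act g μ) * w)),
          ⟨⟨y, hyW, rfl⟩, trivial⟩, ?_⟩
        have h1 : r * SS.act (b * h) y = s * SS.act (a * g) μ := (key y μ).mpr hmem
        refine Prod.ext ?_ ?_
        · show r * SS.act b (SS.act h y) = s * SS.act a (SS.act g μ)
          rw [← SS.act_mul, ← SS.act_mul]
          exact h1
        · show SS.φ b (SS.act h y) * ((SS.φ b (SS.act h y))⁻¹ * (SS.φ a (SS.act g μ) * w))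
            = SS.φ a (SS.act g μ) * w
          rw [mul_inv_cancel_left]

lemma fold_map (L : List (Λ × Λ)) :
    foldC (zsMul SS) (L.map (fun p => ((p.1, (1 : G)), (p.2, (1 : G))))) =
      (foldC (· * ·) L) ×ˢ (Set.univ : Set G) := by
  induction L with
  | nil => simp [foldC, Set.univ_prod_univ]
  | cons p L ih =>
      rw [List.map_cons, foldC_cons, foldC_cons, ih]
      ext ⟨ν, w⟩
      constructor
      · rintro ⟨⟨x, u⟩, ⟨hx, -⟩, heq⟩
        have h1 : p.2 * SS.act 1 x = p.1 * SS.act 1 ν := congrArg Prod.fst heq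
        rw [SS.one_act, SS.one_act] at h1
        exact ⟨⟨x, hx, h1⟩, trivial⟩
      · rintro ⟨⟨x, hx, hxe⟩, -⟩
        refine ⟨(x, w), ⟨hx, trivial⟩, ?_⟩
        refine Prod.ext ?_ ?_
        · show p.2 * SS.act 1 x = p.1 * SS.act 1 ν
          rw [SS.one_act, SS.one_act]
          exact hxe
        · show SS.φ 1 x * w = SS.φ 1 ν * w
          rw [phi_one, phi_one]

lemma cons_zs_eq (hsurj : ∀ μ : Λ, Function.Surjective fun g => SS.φ g μ) :
    Constructibles (zsMul SS) =
      (fun X => X ×ˢ (Set.univ : Set G)) '' Constructibles ((· * ·) : Λ → Λ → Λ) := by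
  ext Z
  rw [constructibles_eq]
  constructor
  · rintro (rfl | ⟨L, rfl⟩)
    · exact ⟨∅, Set.mem_insert _ _, by simp⟩
    · obtain ⟨M, hM⟩ := zs_fold SS hsurj L 1
      refine ⟨foldC (· * ·) M, Or.inr ⟨M, rfl⟩, ?_⟩
      rw [hM]
      have him : SS.act (1 : G) '' foldC (· * ·) M = foldC (· * ·) M := by
        ext x
        constructor
        · rintro ⟨y, hy, rfl⟩
          rw [SS.one_act]
          exact hy
        · intro hx
          exact ⟨x, hx, SS.one_act x⟩
      rw [him]
  · rintro ⟨X, hX, rfl⟩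
    rw [constructibles_eq] at hX
    rcases hX with rfl | ⟨M, rfl⟩
    · left; simp
    · exact Or.inr ⟨M.map (fun p => ((p.1, (1 : G)), (p.2, (1 : G)))),
        (fold_map SS M).symm⟩

end Aux

/-- Let `(G,Λ,φ)` be a single-vertex self-similar `k`-graph such
that `g ↦ φ(g,μ)` is surjective for every `μ`.  A finite collection `F` of
constructible right ideals of `Λ` is a foundation set in `𝒥(Λ)` if and only if
`F × {G}` is a foundation set in `𝒥(Λ ⋈ G)`. -/
theorem foundation_iff_zappaSzep {k : ℕ} {G : Type} [Group G] {Λ : Type}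
    [Monoid Λ] [IsCancelMul Λ] (SS : OneVertexSelfSimilar k G Λ)
    (hsurj : ∀ μ : Λ, Function.Surjective fun g => SS.φ g μ)
    (F : Set (Set Λ)) :
    IsFoundationSet (· * ·) F ↔
      IsFoundationSet (zsMul SS) ((fun X => X ×ˢ (Set.univ : Set G)) '' F) := by
  have hinj : Function.Injective (fun X : Set Λ => X ×ˢ (Set.univ : Set G)) := by
    intro X Y hXY
    simp only at hXY
    ext x
    constructor <;> intro hx
    · have h1 : (x, (1 : G)) ∈ Y ×ˢ (Set.univ : Set G) := by
        rw [← hXY]; exact ⟨hx, trivial⟩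
      exact h1.1
    · have h1 : (x, (1 : G)) ∈ X ×ˢ (Set.univ : Set G) := by
        rw [hXY]; exact ⟨hx, trivial⟩
      exact h1.1
  have hcons := cons_zs_eq SS hsurj
  constructor
  · rintro ⟨hfin, hsub, hfound⟩
    refine ⟨hfin.image _, ?_, ?_⟩
    · rw [hcons]; exact Set.image_mono hsub
    · rintro Z hZ hZne
      rw [hcons] at hZ
      obtain ⟨Y, hY, rfl⟩ := hZ
      have hYne : Y ≠ ∅ := by
        rintro rfl; simp at hZne
      obtain ⟨X, hXF, x, hx⟩ := hfound Y hY hYne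
      exact ⟨X ×ˢ Set.univ, ⟨X, hXF, rfl⟩, ⟨(x, 1), ⟨hx.1, trivial⟩, ⟨hx.2, trivial⟩⟩⟩
  · rintro ⟨hfin, hsub, hfound⟩
    refine ⟨Set.Finite.of_finite_image hfin hinj.injOn, ?_, ?_⟩
    · intro X hX
      have hmem : X ×ˢ (Set.univ : Set G) ∈ Constructibles (zsMul SS) :=
        hsub ⟨X, hX, rfl⟩
      rw [hcons] at hmem
      obtain ⟨Y, hY, hYX⟩ := hmem
      rwa [← hinj hYX]
    · intro Y hY hYne
      have hZ : Y ×ˢ (Set.univ : Set G) ∈ Constructibles (zsMul SS) := by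
        rw [hcons]; exact ⟨Y, hY, rfl⟩
      have hZne : Y ×ˢ (Set.univ : Set G) ≠ ∅ := by
        obtain ⟨y, hy⟩ := Set.nonempty_iff_ne_empty.mpr hYne
        exact Set.nonempty_iff_ne_empty.mp ⟨(y, 1), hy, trivial⟩
      obtain ⟨W, ⟨X, hXF, rfl⟩, ⟨x, gx⟩, hx1, hx2⟩ := hfound _ hZ hZne
      exact ⟨X, hXF, x, hx1.1, hx2.1⟩
end

section
/- Let Λ be a row-finite single-vertex k-graph without sources, and let F' = {X_i = ∪_{j=1}^{t_i} μ_{ij}Λ : 1 ≤ i ≤ l} be a foundation set in 𝒥(Λ). Set n := ⋁_{i,j} d(μ_{ij}). Then the set M = {μ_{ij}α : α ∈ Λ^{n - d(μ_{ij})}, 1 ≤ i ≤ l, 1 ≤ j ≤ t_i} equals Λ^n. -/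
theorem principal_mem_constructibles {S : Type} [Monoid S] (x : S) :
    {y | ∃ s, y = x * s} ∈ Constructibles (· * · : S → S → S) := by
  refine Or.inr ⟨[(1, x)], ?_⟩
  ext y
  simp [eq_comm]

namespace OneVertexKGraphStr

variable {k : ℕ} {Λ : Type} [Monoid Λ] (K : OneVertexKGraphStr k Λ)

theorem eq_of_mul_eq_mul_of_d_eq {μ ν s t : Λ} (h : μ * s = ν * t) (hd : K.d μ = K.d ν) :
    μ = ν := by
  have hdt : K.d t = K.d s := by
    have := congrArg K.d h
    rw [K.d_mul, K.d_mul, hd] at this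
    exact (add_left_cancel this).symm
  obtain ⟨q, _, huniq⟩ := K.factor (μ * s) (K.d μ) (K.d s) (K.d_mul μ s)
  have hμ : (μ, s) = q := huniq _ ⟨rfl, rfl, rfl⟩
  have hν : (ν, t) = q := huniq _ ⟨h, hd.symm, hdt⟩
  exact congrArg Prod.fst (hμ.trans hν.symm)

theorem exists_eq_mul_of_meets {μ x : Λ} (hle : K.d μ ≤ K.d x)
    (hmeet : ({y | ∃ s, y = μ * s} ∩ {y | ∃ t, y = x * t}).Nonempty) :
    ∃ α, K.d α = K.d x - K.d μ ∧ x = μ * α := by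
  obtain ⟨z, ⟨s, hzs⟩, ⟨t, hzt⟩⟩ := hmeet
  obtain ⟨p, ⟨hxp, hp₁, hp₂⟩, _⟩ :=
    K.factor x (K.d μ) (K.d x - K.d μ) (add_tsub_cancel_of_le hle).symm
  have hμp : μ = p.1 :=
    K.eq_of_mul_eq_mul_of_d_eq (s := s) (t := p.2 * t)
      (by rw [← hzs, hzt, hxp, mul_assoc]) hp₁.symm
  exact ⟨p.2, hp₂, by rw [hxp, hμp]⟩

end OneVertexKGraphStr

theorem foundation_sweep_general {k : ℕ} {Λ : Type} [Monoid Λ]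
    (K : OneVertexKGraphStr k Λ)
    {l : ℕ} {t : Fin l → ℕ} (μ : (i : Fin l) → Fin (t i) → Λ)
    (hF : IsFoundationSet (· * ·)
      (Set.range fun i => ⋃ j, {x | ∃ tμ, x = μ i j * tμ}))
    (n : Fin k → ℕ)
    (hn : n = Finset.univ.sup fun i : Fin l =>
      Finset.univ.sup fun j : Fin (t i) => K.d (μ i j)) :
    {x : Λ | ∃ i j α, K.d α = n - K.d (μ i j) ∧ x = μ i j * α} =
      {x : Λ | K.d x = n} := by
  have hle : ∀ i j, K.d (μ i j) ≤ n := fun i j => hn ▸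
    (Finset.le_sup (f := fun j => K.d (μ i j)) (Finset.mem_univ j)).trans
      (Finset.le_sup (f := fun i => Finset.univ.sup fun j => K.d (μ i j)) (Finset.mem_univ i))
  ext x
  constructor
  · rintro ⟨i, j, α, hα, rfl⟩
    show K.d (μ i j * α) = n
    rw [K.d_mul, hα, add_tsub_cancel_of_le (hle i j)]
  · intro (hx : K.d x = n)
    obtain ⟨_, ⟨i, rfl⟩, hmeet⟩ := hF.2.2 _ (principal_mem_constructibles x)
      (Set.nonempty_iff_ne_empty.mp ⟨x, 1, (mul_one x).symm⟩)
    obtain ⟨z, hzμ, hzx⟩ := hmeet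
    obtain ⟨j, hzj⟩ := Set.mem_iUnion.mp hzμ
    obtain ⟨α, hα, rfl⟩ := K.exists_eq_mul_of_meets (hx ▸ hle i j) ⟨z, hzj, hzx⟩
    exact ⟨i, j, α, hx ▸ hα, rfl⟩

/-- Let `Λ` be a row-finite single-vertex `k`-graph without
sources, and let `F' = {Xᵢ = ∪ⱼ μᵢⱼΛ}` be a foundation set in `𝒥(Λ)`.  With
`n = ⋁ᵢⱼ d(μᵢⱼ)`, the set `M = {μᵢⱼα : d(α) = n - d(μᵢⱼ)}` equals `Λⁿ`. -/
theorem foundation_sweep {k : ℕ} {Λ : Type} [Monoid Λ]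
    (K : OneVertexKGraphStr k Λ)
    (hrf : ∀ n : Fin k → ℕ, {μ : Λ | K.d μ = n}.Finite)
    (hns : ∀ n : Fin k → ℕ, ∃ μ : Λ, K.d μ = n)
    {l : ℕ} {t : Fin l → ℕ} (μ : (i : Fin l) → Fin (t i) → Λ)
    (hF : IsFoundationSet (· * ·)
      (Set.range fun i => ⋃ j, {x | ∃ tμ, x = μ i j * tμ}))
    (n : Fin k → ℕ)
    (hn : n = Finset.univ.sup fun i : Fin l =>
      Finset.univ.sup fun j : Fin (t i) => K.d (μ i j)) :
    {x : Λ | ∃ i j α, K.d α = n - K.d (μ i j) ∧ x = μ i j * α} =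
      {x : Λ | K.d x = n} :=
  foundation_sweep_general K μ hF n hn
end

section
/- Let (G,Λ,φ) be a self-similar k-graph and I an ideal of EP_R(G,Λ). Then H_I := {v ∈ Λ^0 : s_v ∈ I} is a G-saturated G-hereditary subset of Λ^0. -/
/-- A row-finite `k`-graph without sources: a small category with vertices `V`,
paths `P`, range `r`, source `s`, degree functor `d : P → ℕ^k`, and the
unique factorization property. Composition `comp` is total, but only meaningful
on composable pairs (`s μ = r ν`). -/
structure KGraph (k : ℕ) where
  V : Type
  P : Type
  r : P → V
  s : P → V
  vtx : V → P
  comp : P → P → P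
  d : P → Fin k → ℕ
  r_vtx : ∀ v, r (vtx v) = v
  s_vtx : ∀ v, s (vtx v) = v
  d_vtx : ∀ v, d (vtx v) = 0
  r_comp : ∀ μ ν, s μ = r ν → r (comp μ ν) = r μ
  s_comp : ∀ μ ν, s μ = r ν → s (comp μ ν) = s ν
  d_comp : ∀ μ ν, s μ = r ν → d (comp μ ν) = d μ + d ν
  comp_assoc : ∀ μ ν ξ, s μ = r ν → s ν = r ξ →
    comp (comp μ ν) ξ = comp μ (comp ν ξ)
  vtx_comp : ∀ μ, comp (vtx (r μ)) μ = μ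
  comp_vtx : ∀ μ, comp μ (vtx (s μ)) = μ
  factor : ∀ (μ : P) (m n : Fin k → ℕ), d μ = m + n →
    ∃! p : P × P, s p.1 = r p.2 ∧ comp p.1 p.2 = μ ∧ d p.1 = m ∧ d p.2 = n
  rowFinite : ∀ (v : V) (n : Fin k → ℕ), {μ | r μ = v ∧ d μ = n}.Finite
  noSources : ∀ (v : V) (n : Fin k → ℕ), ∃ μ, r μ = v ∧ d μ = n

/-- A self-similar `k`-graph `(G, Λ, φ)`: the group `G` acts on the `k`-graph by
degree-preserving automorphisms, and `φ : G × Λ → G` is a `1`-cocycle satisfying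
the Exel–Pardo/Li–Yang axioms. -/
structure SelfSimilarKGraph (k : ℕ) (G : Type) [Group G] extends KGraph k where
  actV : G → V → V
  actP : G → P → P
  φ : G → P → G
  actV_one : ∀ v, actV 1 v = v
  actV_mul : ∀ g h v, actV (g * h) v = actV g (actV h v)
  actP_one : ∀ μ, actP 1 μ = μ
  actP_mul : ∀ g h μ, actP (g * h) μ = actP g (actP h μ)
  actP_d : ∀ g μ, d (actP g μ) = d μ
  actP_r : ∀ g μ, r (actP g μ) = actV g (r μ)
  actP_s : ∀ g μ, s (actP g μ) = actV g (s μ)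
  actP_vtx : ∀ g v, actP g (vtx v) = vtx (actV g v)
  cocycle : ∀ g h μ, φ (g * h) μ = φ g (actP h μ) * φ h μ
  selfsim : ∀ g μ ν, s μ = r ν → actP g (comp μ ν) = comp (actP g μ) (actP (φ g μ) ν)
  φ_comp : ∀ g μ ν, s μ = r ν → φ g (comp μ ν) = φ (φ g μ) ν
  φ_vtx : ∀ g v, φ g (vtx v) = g

/-- An Exel–Pardo `(G,Λ)`-family in a `*`-algebra `A`: a Kumjian–Pask `Λ`-family
`{s_μ}` together with elements `{u_{v,g}}` satisfying the Exel–Pardo relations. -/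
structure EPFamily {k : ℕ} {G : Type} [Group G] (SS : SelfSimilarKGraph k G)
    (A : Type) [Ring A] [StarRing A] where
  S : SS.P → A
  U : SS.V → G → A
  /-- (KP1) vertex projections are idempotent -/
  proj : ∀ v, S (SS.vtx v) * S (SS.vtx v) = S (SS.vtx v)
  /-- (KP1) vertex projections are self-adjoint -/
  proj_star : ∀ v, star (S (SS.vtx v)) = S (SS.vtx v)
  /-- (KP1) vertex projections are pairwise orthogonal -/
  orth : ∀ v w, v ≠ w → S (SS.vtx v) * S (SS.vtx w) = 0
  /-- (KP2) `s_{μν} = s_μ s_ν` -/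
  comp_eq : ∀ μ ν, SS.s μ = SS.r ν → S (SS.comp μ ν) = S μ * S ν
  /-- (KP3) `s_μ* s_μ = s_{s(μ)}` -/
  star_self : ∀ μ, star (S μ) * S μ = S (SS.vtx (SS.s μ))
  /-- (KP4) `s_v = ∑_{μ ∈ vΛⁿ} s_μ s_μ*` -/
  ck : ∀ (v : SS.V) (n : Fin k → ℕ),
    S (SS.vtx v) = ∑ μ ∈ (SS.rowFinite v n).toFinset, S μ * star (S μ)
  /-- (2) `u_{v,e} = s_v` -/
  u_one : ∀ v, U v 1 = S (SS.vtx v)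
  /-- (3) `u_{v,g}* = u_{g⁻¹·v,g⁻¹}` -/
  u_star : ∀ v g, star (U v g) = U (SS.actV g⁻¹ v) g⁻¹
  /-- (4) `u_{v,g} s_μ = δ_{v,g·r(μ)} s_{g·μ} u_{g·s(μ),φ(g,μ)}` (case `v = g·r(μ)`) -/
  u_s_eq : ∀ v g μ, v = SS.actV g (SS.r μ) →
    U v g * S μ = S (SS.actP g μ) * U (SS.actV g (SS.s μ)) (SS.φ g μ)
  /-- (4) (case `v ≠ g·r(μ)`) -/
  u_s_ne : ∀ v g μ, v ≠ SS.actV g (SS.r μ) → U v g * S μ = 0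
  /-- (5) `u_{v,g} u_{w,h} = δ_{v,g·w} u_{v,gh}` (case `v = g·w`) -/
  u_u_eq : ∀ v w g h, v = SS.actV g w → U v g * U w h = U v (g * h)
  /-- (5) (case `v ≠ g·w`) -/
  u_u_ne : ∀ v w g h, v ≠ SS.actV g w → U v g * U w h = 0
/-- `H ⊆ Λ⁰` is `G`-hereditary if `r(μ) ∈ H` implies `g·s(μ) ∈ H`. -/
def GHereditary {k : ℕ} {G : Type} [Group G] (SS : SelfSimilarKGraph k G)
    (H : Set SS.V) : Prop :=
  ∀ (g : G) (μ : SS.P), SS.r μ ∈ H → SS.actV g (SS.s μ) ∈ H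

/-- `H ⊆ Λ⁰` is `G`-saturated if `s(vΛⁿ) ⊆ H` for some `n` implies `v ∈ H`. -/
def GSaturated {k : ℕ} {G : Type} [Group G] (SS : SelfSimilarKGraph k G)
    (H : Set SS.V) : Prop :=
  ∀ (v : SS.V) (n : Fin k → ℕ),
    (∀ μ : SS.P, SS.r μ = v → SS.d μ = n → SS.s μ ∈ H) → v ∈ H

/-!
Both closure properties come from sandwiching vertex projections inside the ideal.
Hereditary: `s_{s(μ)} = s_μ* s_{r(μ)} s_μ`, and conjugation by `u_{g·v,g}` carries `s_v` to
`s_{g·v}`, since `u_{g·v,g} s_v = s_{g·v} u_{g·v,g}` and `u_{g·v,g} u_{v,g⁻¹} = s_{g·v}`.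
Saturated: by (KP4), `s_v = ∑_{μ ∈ vΛⁿ} s_μ s_{s(μ)} s_μ*`.
-/

namespace EPFamily

variable {k : ℕ} {G : Type} [Group G] {SS : SelfSimilarKGraph k G}
  {A : Type} [Ring A] [StarRing A] (F : EPFamily SS A)

theorem vtx_r_mul_S (μ : SS.P) : F.S (SS.vtx (SS.r μ)) * F.S μ = F.S μ := by
  rw [← F.comp_eq _ _ (SS.s_vtx _), SS.vtx_comp]

theorem S_mul_vtx_s (μ : SS.P) : F.S μ * F.S (SS.vtx (SS.s μ)) = F.S μ := by
  rw [← F.comp_eq _ _ (SS.r_vtx _).symm, SS.comp_vtx]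

theorem star_S_mul_vtx_r_mul_S (μ : SS.P) :
    star (F.S μ) * F.S (SS.vtx (SS.r μ)) * F.S μ = F.S (SS.vtx (SS.s μ)) := by
  rw [mul_assoc, F.vtx_r_mul_S, F.star_self]

theorem U_mul_vtx (g : G) (v : SS.V) :
    F.U (SS.actV g v) g * F.S (SS.vtx v) = F.S (SS.vtx (SS.actV g v)) * F.U (SS.actV g v) g := by
  rw [F.u_s_eq _ _ _ (by rw [SS.r_vtx]), SS.actP_vtx, SS.s_vtx, SS.φ_vtx]

theorem U_mul_vtx_mul_U_inv (g : G) (v : SS.V) :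
    F.U (SS.actV g v) g * F.S (SS.vtx v) * F.U v g⁻¹ = F.S (SS.vtx (SS.actV g v)) := by
  rw [F.U_mul_vtx, mul_assoc, F.u_u_eq _ _ _ _ rfl, mul_inv_cancel, F.u_one, F.proj]

theorem gHereditary_of_sandwich_mem (I : Set A) (hI : ∀ a ∈ I, ∀ b c : A, b * a * c ∈ I) :
    GHereditary SS {v | F.S (SS.vtx v) ∈ I} := by
  intro g μ hμ
  have hs : F.S (SS.vtx (SS.s μ)) ∈ I := F.star_S_mul_vtx_r_mul_S μ ▸ hI _ hμ _ _
  show F.S (SS.vtx (SS.actV g (SS.s μ))) ∈ I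
  exact F.U_mul_vtx_mul_U_inv g (SS.s μ) ▸ hI _ hs _ _

theorem gSaturated_of_sandwich_mem (I : AddSubmonoid A)
    (hI : ∀ a ∈ I, ∀ b c : A, b * a * c ∈ I) :
    GSaturated SS {v | F.S (SS.vtx v) ∈ I} := by
  intro v n hsrc
  change F.S (SS.vtx v) ∈ I
  rw [F.ck v n]
  refine I.sum_mem fun μ hμ => ?_
  obtain ⟨hr, hd⟩ := (Set.Finite.mem_toFinset _).mp hμ
  simpa only [F.S_mul_vtx_s] using hI _ (hsrc μ hr hd) (F.S μ) (star (F.S μ))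

end EPFamily

theorem ideal_vertex_set_saturated_hereditary_general {k : ℕ} {G : Type} [Group G]
    (SS : SelfSimilarKGraph k G) (R : Type) [CommRing R]
    {A : Type} [Ring A] [StarRing A] [Algebra R A]
    (F : EPFamily SS A) (I : Submodule R A)
    (hmul_left : ∀ a ∈ I, ∀ b : A, b * a ∈ I)
    (hmul_right : ∀ a ∈ I, ∀ b : A, a * b ∈ I) :
    GHereditary SS {v | F.S (SS.vtx v) ∈ I} ∧
    GSaturated SS {v | F.S (SS.vtx v) ∈ I} := by
  have hsandwich : ∀ a ∈ I, ∀ b c : A, b * a * c ∈ I :=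
    fun a ha b c => hmul_right _ (hmul_left a ha b) c
  exact ⟨F.gHereditary_of_sandwich_mem I hsandwich,
    F.gSaturated_of_sandwich_mem I.toAddSubmonoid hsandwich⟩

/-- If `I` is a (two-sided, self-adjoint) ideal of `EP_R(G,Λ)`,
then `H_I = {v ∈ Λ⁰ : s_v ∈ I}` is a `G`-saturated `G`-hereditary subset of `Λ⁰`. -/
theorem ideal_vertex_set_saturated_hereditary {k : ℕ} {G : Type} [Group G]
    (SS : SelfSimilarKGraph k G) (R : Type) [CommRing R] [StarRing R]
    {A : Type} [Ring A] [StarRing A] [Algebra R A] [StarModule R A]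
    (F : EPFamily SS A) (I : Submodule R A)
    (hmul_left : ∀ a ∈ I, ∀ b : A, b * a ∈ I)
    (hmul_right : ∀ a ∈ I, ∀ b : A, a * b ∈ I)
    (hstar : ∀ a ∈ I, star a ∈ I) :
    GHereditary SS {v | F.S (SS.vtx v) ∈ I} ∧
    GSaturated SS {v | F.S (SS.vtx v) ∈ I} :=
  ideal_vertex_set_saturated_hereditary_general SS R F I hmul_left hmul_right
end
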